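/- arXiv:1501.03182 — 3 statements merged into one kernel-verified Lean document; each statement's English description precedes it below -/
import Mathlib

section
/- Let A > C > B > 0 and suppose some vector x ∈ ℝ⁴ induces a q-basis. Then there exists a vector y ∈ ℝ⁴ inducing a q-basis such that g(y,qy) = 0 and g(y,q²y) = 0; that is, {y, qy, q²y, q³y} is a g-orthogonal q-basis of ℝ⁴ (orthogonality of the remaining pairs follows since q is a g-isometry). -/
noncomputable section

/-- `V` is the model space `ℝ⁴`. -/
abbrev V : Type := Fin 4 → ℝ

/-- The cyclic-shift map `q(x₁,x₂,x₃,x₄) = (x₂,x₃,x₄,x₁)`. -/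
def q (x : V) : V := fun i => x (i + 1)

/-- The circulant matrix with rows `(A,B,C,B), (B,A,B,C), (C,B,A,B), (B,C,B,A)`. -/
def G (A B C : ℝ) : Matrix (Fin 4) (Fin 4) ℝ :=
  !![A, B, C, B; B, A, B, C; C, B, A, B; B, C, B, A]

/-- The bilinear form on `ℝ⁴` whose matrix in the standard basis is `G A B C`. -/
def g (A B C : ℝ) (x y : V) : ℝ :=
  dotProduct x (Matrix.mulVec (G A B C) y)

/-- `x` induces a `q`-basis if `{x, qx, q²x, q³x}` is linearly independent. -/
def inducesQBasis (x : V) : Prop :=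
  LinearIndependent ℝ ![x, q x, q (q x), q (q (q x))]

/-- The angle between `a` and `b` measured with respect to `g`. -/
def angle (A B C : ℝ) (a b : V) : ℝ :=
  Real.arccos (g A B C a b / Real.sqrt (g A B C a a * g A B C b b))

/-- `R` is multilinear (linear in each of its four arguments). -/
def MultilinearR (R : V → V → V → V → ℝ) : Prop :=
  (∀ a a' y z u, R (a + a') y z u = R a y z u + R a' y z u) ∧
  (∀ (c : ℝ) a y z u, R (c • a) y z u = c * R a y z u) ∧
  (∀ x a a' z u, R x (a + a') z u = R x a z u + R x a' z u) ∧
  (∀ (c : ℝ) x a z u, R x (c • a) z u = c * R x a z u) ∧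
  (∀ x y a a' u, R x y (a + a') u = R x y a u + R x y a' u) ∧
  (∀ (c : ℝ) x y a u, R x y (c • a) u = c * R x y a u) ∧
  (∀ x y z a a', R x y z (a + a') = R x y z a + R x y z a') ∧
  (∀ (c : ℝ) x y z a, R x y z (c • a) = c * R x y z a)

/-- `R` has the symmetries of a Riemannian curvature tensor of type `(0,4)`. -/
def CurvSymm (R : V → V → V → V → ℝ) : Prop :=
  (∀ x y z u, R x y z u = - R y x z u) ∧
  (∀ x y z u, R x y z u = - R x y u z) ∧
  (∀ x y z u, R x y z u = R z u x y) ∧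
  (∀ x y z u, R x y z u + R y z x u + R z x y u = 0)

/-- The sectional curvature of the plane spanned by `a` and `b`. -/
def mu (A B C : ℝ) (R : V → V → V → V → ℝ) (a b : V) : ℝ :=
  R a b a b / (g A B C a a * g A B C b b - (g A B C a b) ^ 2)

/-!
The circulant matrix `G A B C` is diagonalised by the discrete Fourier basis: `(1,1,1,1)`,
`(1,-1,1,-1)` and the plane spanned by `(1,0,-1,0)`, `(0,1,0,-1)` are eigenspaces with eigenvalues
`A + 2B + C`, `A - 2B + C` and `A - C`, all positive when `A > C > B > 0`, and `q` acts on them by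
`1`, `-1` and a quarter turn. So for `y = a(1,1,1,1) + b(1,-1,1,-1) + c(1,0,-1,0)` both `g(y, qy)`
and `g(y, q²y)` are diagonal quadratic forms in `(a, b, c)`, which vanish simultaneously at
`a² = (A-C)(A-2B+C)`, `b² = (A-C)(A+2B+C)`, `c² = 4(A+2B+C)(A-2B+C)`; and `y` induces a `q`-basis
as soon as `a, b, c` are all nonzero.
-/

lemma q_cons (a b c d : ℝ) : q ![a, b, c, d] = ![b, c, d, a] := by
  funext i
  fin_cases i <;> simp [q]

lemma g_cons (A B C a b c d e f h k : ℝ) :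
    g A B C ![a, b, c, d] ![e, f, h, k] =
      a * (A*e + B*f + C*h + B*k) + b * (B*e + A*f + B*h + C*k) + c * (C*e + B*f + A*h + B*k)
        + d * (B*e + C*f + B*h + A*k) := by
  simp [g, G, dotProduct, Matrix.mulVec, Fin.sum_univ_four]

lemma det_leftCirculant_fin_four (a b c d : ℝ) :
    (!![a, b, c, d; b, c, d, a; c, d, a, b; d, a, b, c]).det
      = -((a + b + c + d) * (a - b + c - d) * ((a - c) ^ 2 + (b - d) ^ 2)) := by
  rw [Matrix.det_succ_row_zero]
  simp [Fin.sum_univ_four, Matrix.det_fin_three, Fin.succAbove]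
  ring

lemma inducesQBasis_cons_iff (a b c d : ℝ) :
    inducesQBasis ![a, b, c, d] ↔
      (a + b + c + d) * (a - b + c - d) * ((a - c) ^ 2 + (b - d) ^ 2) ≠ 0 := by
  have rows : (![![a, b, c, d], ![b, c, d, a], ![c, d, a, b], ![d, a, b, c]] : Fin 4 → V)
      = (!![a, b, c, d; b, c, d, a; c, d, a, b; d, a, b, c]).row := by
    funext i j; fin_cases i <;> fin_cases j <;> rfl
  rw [inducesQBasis, q_cons, q_cons, q_cons, rows, Matrix.linearIndependent_rows_iff_isUnit,
    Matrix.isUnit_iff_isUnit_det, isUnit_iff_ne_zero, det_leftCirculant_fin_four, neg_ne_zero]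

/-- The vector `a(1,1,1,1) + b(1,-1,1,-1) + c(1,0,-1,0)`. -/
def fourierVec (a b c : ℝ) : V := ![a + b + c, a - b, a + b - c, a - b]

lemma g_fourierVec_q (A B C a b c : ℝ) :
    g A B C (fourierVec a b c) (q (fourierVec a b c))
      = 4 * ((A + 2*B + C) * a ^ 2 - (A - 2*B + C) * b ^ 2) := by
  rw [fourierVec, q_cons, g_cons]
  ring

lemma g_fourierVec_q_q (A B C a b c : ℝ) :
    g A B C (fourierVec a b c) (q (q (fourierVec a b c)))
      = 4 * (A + 2*B + C) * a ^ 2 + 4 * (A - 2*B + C) * b ^ 2 - 2 * (A - C) * c ^ 2 := by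
  rw [fourierVec, q_cons, q_cons, g_cons]
  ring

lemma inducesQBasis_fourierVec {a b c : ℝ} (ha : a ≠ 0) (hb : b ≠ 0) (hc : c ≠ 0) :
    inducesQBasis (fourierVec a b c) := by
  rw [fourierVec, inducesQBasis_cons_iff]
  ring_nf
  simp [ha, hb, hc]

theorem stmt4_general (A B C : ℝ) (h1 : A > C) (h2 : C > B) (h3 : B > 0) :
    ∃ y : V, inducesQBasis y ∧ g A B C y (q y) = 0 ∧ g A B C y (q (q y)) = 0 := by
  have sqrt_of_pos : ∀ r : ℝ, 0 < r → ∃ s : ℝ, s ≠ 0 ∧ s ^ 2 = r :=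
    fun r hr => ⟨√r, (Real.sqrt_pos.2 hr).ne', Real.sq_sqrt hr.le⟩
  have hl0 : 0 < A + 2*B + C := by linarith
  have hl2 : 0 < A - 2*B + C := by linarith
  have hl1 : 0 < A - C := by linarith
  obtain ⟨a, ha, ha2⟩ := sqrt_of_pos _ (mul_pos hl1 hl2)
  obtain ⟨b, hb, hb2⟩ := sqrt_of_pos _ (mul_pos hl1 hl0)
  obtain ⟨c, hc, hc2⟩ := sqrt_of_pos (4 * ((A + 2*B + C) * (A - 2*B + C))) (by positivity)
  refine ⟨fourierVec a b c, inducesQBasis_fourierVec ha hb hc, ?_, ?_⟩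
  · rw [g_fourierVec_q, ha2, hb2]
    ring
  · rw [g_fourierVec_q_q, ha2, hb2, hc2]
    ring

theorem stmt4 (A B C : ℝ) (h1 : A > C) (h2 : C > B) (h3 : B > 0) (x : V)
    (hx : inducesQBasis x) :
    ∃ y : V, inducesQBasis y ∧ g A B C y (q y) = 0 ∧ g A B C y (q (q y)) = 0 :=
  stmt4_general A B C h1 h2 h3
end
end

section
/- Assume R(x,y,qz,qu) = R(x,y,z,u) for all x,y,z,u. Assume A > C > B > 0 and let u be a vector inducing a q-basis. Then the sectional curvature of the plane spanned by u and q²u vanishes: μ(u,q²u) = 0 (indeed R(u,q²u,u,q²u) = 0). -/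
noncomputable section

theorem q_q_q_q (x : V) : q (q (q (q x))) = x := by
  funext i
  show x (i + 1 + 1 + 1 + 1) = x i
  congr 1
  omega

/- Since `q⁴ = id`, invariance under `q²` exchanges `z` and `q²z` in the last two slots, so
antisymmetry makes the value equal to its own negative. -/
theorem eq_zero_of_q_invariant {R : V → V → V → V → ℝ}
    (hanti : ∀ x y z u, R x y z u = - R x y u z)
    (hq : ∀ x y z u, R x y (q z) (q u) = R x y z u) (x y z : V) :
    R x y z (q (q z)) = 0 := by
  have hswap : R x y (q (q z)) z = R x y z (q (q z)) := by
    calc R x y (q (q z)) z = R x y (q (q z)) (q (q (q (q z)))) := by rw [q_q_q_q]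
      _ = R x y (q z) (q (q (q z))) := hq _ _ _ _
      _ = R x y z (q (q z)) := hq _ _ _ _
  linarith [hanti x y z (q (q z))]

theorem stmt10_general (A B C : ℝ) (R : V → V → V → V → ℝ)
    (hsym : CurvSymm R)
    (hq : ∀ x y z u, R x y (q z) (q u) = R x y z u)
    (u : V) :
    mu A B C R u (q (q u)) = 0 ∧ R u (q (q u)) u (q (q u)) = 0 := by
  have hR : R u (q (q u)) u (q (q u)) = 0 := eq_zero_of_q_invariant hsym.2.1 hq _ _ _
  exact ⟨by rw [mu, hR, zero_div], hR⟩

theorem stmt10 (A B C : ℝ) (R : V → V → V → V → ℝ)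
    (hml : MultilinearR R) (hsym : CurvSymm R)
    (hq : ∀ x y z u, R x y (q z) (q u) = R x y z u)
    (h1 : A > C) (h2 : C > B) (h3 : B > 0)
    (u : V) (hu : inducesQBasis u) :
    mu A B C R u (q (q u)) = 0 ∧ R u (q (q u)) u (q (q u)) = 0 :=
  stmt10_general A B C R hsym hq u
end
end

section
/- Assume R(x,y,qz,qu) = R(x,y,z,u) for all x,y,z,u. Assume A > C > B > 0, let x ∈ ℝ⁴ satisfy g(x,x) = 1, g(x,qx) = 0, g(x,q²x) = 0 (g-orthonormal q-basis), and let u be a vector with g(u,u) = 1 inducing a q-basis. Set cφ = g(u,qu) and cθ = g(u,q²u). Then μ(u,qu) = ((1−cθ)²/(1−cφ²))·μ(x,qx). -/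
noncomputable section

/-
Invariance of `R` under `q` in its last two slots, together with antisymmetry there, forces
`R(x,y,·,·)` to be a multiple of the circulant 2-form `ω` with first row `(0,1,0,-1)`; pair
symmetry then gives `R = λ ω ⊗ ω`. For a `g`-unit vector `v` one computes
`g(v,q²v) - g(v,v) = (A - C) ω(v,qv)`, so
`μ(v,qv) = λ (1 - g(v,q²v))² / ((A - C)² (1 - g(v,qv)²))`, and the orthonormal
`x` identifies `λ / (A - C)²` with `μ(x,qx)`.
-/

lemma q_single (j : Fin 4) (c : ℝ) : q (Pi.single j c) = Pi.single (j - 1) c := by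
  ext i
  simp only [q, Pi.single_apply, eq_sub_iff_add_eq]

lemma g_q_q (A B C : ℝ) (v w : V) : g A B C (q v) (q w) = g A B C v w := by
  simp only [g, G, q, dotProduct, Matrix.mulVec, Fin.sum_univ_four, Matrix.of_apply,
    Matrix.cons_val', Matrix.cons_val_fin_one, Matrix.cons_val, Fin.reduceAdd, Fin.isValue]
  ring

def omegaMatrix : Matrix (Fin 4) (Fin 4) ℝ := Matrix.circulant ![0, -1, 0, 1]

def omegaForm (z u : V) : ℝ := dotProduct z (Matrix.mulVec omegaMatrix u)

lemma g_sub_g_eq_omegaForm (A B C : ℝ) (v : V) :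
    g A B C v (q (q v)) - g A B C v v = (A - C) * omegaForm v (q v) := by
  simp only [g, G, omegaForm, omegaMatrix, q, dotProduct, Matrix.mulVec, Fin.sum_univ_four,
    Matrix.of_apply, Matrix.circulant_apply, Matrix.cons_val', Matrix.cons_val_fin_one,
    Matrix.cons_val, Fin.reduceAdd, Fin.reduceSub, Fin.isValue]
  ring

open Fin.NatCast in
lemma apply_single_eq_mul_omegaMatrix (F : V → V → ℝ) (hanti : ∀ z u, F z u = -F u z)
    (hq : ∀ z u, F (q z) (q u) = F z u) (i j : Fin 4) :
    F (Pi.single i 1) (Pi.single j 1) = F (Pi.single 0 1) (Pi.single 1 1) * omegaMatrix i j := by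
  have hshift (k : ℕ) : ∀ i j : Fin 4,
      F (Pi.single (i + k) 1) (Pi.single (j + k) 1) = F (Pi.single i 1) (Pi.single j 1) := by
    induction k with
    | zero => simp
    | succ k ih =>
      intro i j
      rw [← hq, q_single, q_single]
      push_cast
      simpa only [← add_assoc, add_sub_cancel_right] using ih i j
  have hdiff (i j : Fin 4) :
      F (Pi.single i 1) (Pi.single j 1) = F (Pi.single 0 1) (Pi.single (j - i) 1) := by
    simpa using hshift i.val 0 (j - i)
  have h00 : F (Pi.single 0 1) (Pi.single 0 1) = 0 := by
    linarith [hanti (Pi.single 0 1) (Pi.single 0 1)]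
  have h02 : F (Pi.single 0 1) (Pi.single 2 1) = 0 := by
    have h := hanti (Pi.single 0 1) (Pi.single 2 1)
    rw [hdiff 2 0] at h
    simp only [Fin.reduceSub] at h
    linarith
  have h03 : F (Pi.single 0 1) (Pi.single 3 1) = -F (Pi.single 0 1) (Pi.single 1 1) := by
    rw [hanti, hdiff 3 0]
    simp only [Fin.reduceSub]
  fin_cases i <;> fin_cases j <;> rw [hdiff] <;>
    simp only [Fin.mk_zero, Fin.mk_one, Fin.reduceFinMk, Fin.reduceSub] <;>
    simp [omegaMatrix, h00, h02, h03]

lemma bilinForm_apply_eq_mul_omegaForm (F : LinearMap.BilinForm ℝ V)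
    (hanti : ∀ z u, F z u = -F u z) (hq : ∀ z u, F (q z) (q u) = F z u) (z u : V) :
    F z u = F (Pi.single 0 1) (Pi.single 1 1) * omegaForm z u := by
  have hmat :
      LinearMap.BilinForm.toMatrix' F = F (Pi.single 0 1) (Pi.single 1 1) • omegaMatrix := by
    ext i j
    simpa using apply_single_eq_mul_omegaMatrix (fun a b => F a b) hanti hq i j
  calc F z u = Matrix.toBilin' (LinearMap.BilinForm.toMatrix' F) z u := by
        rw [Matrix.toBilin'_toMatrix']
    _ = F (Pi.single 0 1) (Pi.single 1 1) * omegaForm z u := by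
        rw [Matrix.toBilin'_apply', hmat, Matrix.smul_mulVec, dotProduct_smul, smul_eq_mul,
          omegaForm]

lemma curvature_eq_mul_omegaForm_mul_omegaForm {R : V → V → V → V → ℝ}
    (hml : MultilinearR R) (hsym : CurvSymm R) (hq : ∀ x y z u, R x y (q z) (q u) = R x y z u)
    (x y z u : V) :
    R x y z u = R (Pi.single 0 1) (Pi.single 1 1) (Pi.single 0 1) (Pi.single 1 1) *
      omegaForm x y * omegaForm z u := by
  obtain ⟨add₁, smul₁, add₂, smul₂, add₃, smul₃, add₄, smul₄⟩ := hml
  obtain ⟨anti₁₂, anti₃₄, pair_symm, -⟩ := hsym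
  have hzu := bilinForm_apply_eq_mul_omegaForm
    (LinearMap.mk₂ ℝ (R x y) (add₃ x y) (fun c => smul₃ c x y)
      (add₄ x y) (fun c => smul₄ c x y))
    (anti₃₄ x y) (hq x y) z u
  have hq₁₂ (a b : V) :
      R (q a) (q b) (Pi.single 0 1) (Pi.single 1 1) = R a b (Pi.single 0 1) (Pi.single 1 1) := by
    rw [pair_symm, hq, pair_symm]
  have hxy := bilinForm_apply_eq_mul_omegaForm
    (LinearMap.mk₂ ℝ (fun a b => R a b (Pi.single 0 1) (Pi.single 1 1))
      (fun a a' b => add₁ a a' b _ _) (fun c a b => smul₁ c a b _ _)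
      (fun a b b' => add₂ a b b' _ _) (fun c a b => smul₂ c a b _ _))
    (fun a b => anti₁₂ a b _ _) hq₁₂ x y
  simp only [LinearMap.mk₂_apply] at hzu hxy
  rw [hzu, hxy]

lemma mu_q_of_g_self_eq_one (A B C : ℝ) {R : V → V → V → V → ℝ} {lam : ℝ}
    (hR : ∀ a b, R a b a b = lam * omegaForm a b ^ 2) {v : V} (hv : g A B C v v = 1) :
    mu A B C R v (q v) = lam * omegaForm v (q v) ^ 2 / (1 - g A B C v (q v) ^ 2) := by
  rw [mu, hR, g_q_q, hv, one_mul]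

theorem stmt11_general (A B C : ℝ) (R : V → V → V → V → ℝ)
    (hml : MultilinearR R) (hsym : CurvSymm R)
    (hq : ∀ x y z u, R x y (q z) (q u) = R x y z u)
    (x : V) (hx1 : g A B C x x = 1) (hx2 : g A B C x (q x) = 0)
    (hx3 : g A B C x (q (q x)) = 0)
    (u : V) (hu1 : g A B C u u = 1) :
    mu A B C R u (q u) =
      ((1 - g A B C u (q (q u))) ^ 2 / (1 - (g A B C u (q u)) ^ 2)) *
        mu A B C R x (q x) := by
  obtain ⟨lam, hR⟩ : ∃ lam, ∀ a b, R a b a b = lam * omegaForm a b ^ 2 :=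
    ⟨_, fun a b => by rw [curvature_eq_mul_omegaForm_mul_omegaForm hml hsym hq]; ring⟩
  have hωu : g A B C u (q (q u)) - 1 = (A - C) * omegaForm u (q u) := by
    rw [← hu1, g_sub_g_eq_omegaForm]
  have hωx : -1 = (A - C) * omegaForm x (q x) := by
    rw [← g_sub_g_eq_omegaForm, hx1, hx3, zero_sub]
  rw [mu_q_of_g_self_eq_one A B C hR hu1, mu_q_of_g_self_eq_one A B C hR hx1, hx2,
    div_mul_eq_mul_div]
  congr 1
  linear_combination
    -(g A B C u (q (q u)) - 1 + (A - C) * omegaForm u (q u)) * lam * omegaForm x (q x) ^ 2 * hωu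
      - lam * omegaForm u (q u) ^ 2 * (1 - (A - C) * omegaForm x (q x)) * hωx

theorem stmt11 (A B C : ℝ) (R : V → V → V → V → ℝ)
    (hml : MultilinearR R) (hsym : CurvSymm R)
    (hq : ∀ x y z u, R x y (q z) (q u) = R x y z u)
    (h1 : A > C) (h2 : C > B) (h3 : B > 0)
    (x : V) (hx1 : g A B C x x = 1) (hx2 : g A B C x (q x) = 0)
    (hx3 : g A B C x (q (q x)) = 0)
    (u : V) (hu : inducesQBasis u) (hu1 : g A B C u u = 1) :
    mu A B C R u (q u) =
      ((1 - g A B C u (q (q u))) ^ 2 / (1 - (g A B C u (q u)) ^ 2)) *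
        mu A B C R x (q x) :=
  stmt11_general A B C R hml hsym hq x hx1 hx2 hx3 u hu1
end
end
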